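/- arXiv:2405.17986 — 2 statements merged into one kernel-verified Lean document; each statement's English description precedes it below -/
import Mathlib

section
/- Let A be maximal dissipative on H with (A−I)^{-1} bounded, and Q := -(1/2)((A−I)^{-1} + ((A−I)^{-1})*). Then the form r[x] = -Re⟨Ax,x⟩ on dom A is closable if and only if the operator Q^{1/2}(A−I) (with domain dom A) is closable. -/
open scoped InnerProductSpace
open Filter

/-- For maximal dissipative `A` with bounded inverse `J = (A−I)^{-1}` and
`S = Q^{1/2}` the nonnegative self-adjoint square root of `Q = -(1/2)(J + J*)`, the form
`r[x] = -Re⟨Ax,x⟩` on `dom A` is closable iff the operator `Q^{1/2}(A−I)` (domain `dom A`)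
is closable. -/
theorem stmt6 {H : Type*} [NormedAddCommGroup H] [InnerProductSpace ℂ H] [CompleteSpace H]
    (A : H →ₗ.[ℂ] H)
    (hdiss : ∀ x : A.domain, (⟪A x, (x : H)⟫_ℂ).re ≤ 0)
    (J : H →L[ℂ] H)
    (hJ1 : ∀ x : A.domain, J (A x - (x : H)) = (x : H))
    (hJ2 : Function.Surjective (fun x : A.domain => A x - (x : H)))
    (S : H →L[ℂ] H) (hSsa : IsSelfAdjoint S)
    (hSpos : ∀ v : H, 0 ≤ (⟪S v, v⟫_ℂ).re)
    (hSsq : S ∘L S = -((1/2 : ℂ) • (J + ContinuousLinearMap.adjoint J))) :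
    (∀ xs : ℕ → A.domain,
        Tendsto (fun n => ((xs n : H))) atTop (nhds 0) →
        (∀ ε > 0, ∃ N, ∀ n ≥ N, ∀ m ≥ N,
          -(⟪A (xs n - xs m), ((xs n - xs m : A.domain) : H)⟫_ℂ).re < ε) →
        Tendsto (fun n => -(⟪A (xs n), ((xs n : A.domain) : H)⟫_ℂ).re) atTop (nhds 0))
    ↔ LinearPMap.IsClosable
        { domain := A.domain,
          toFun := (S : H →ₗ[ℂ] H).comp (A.toFun - A.domain.subtype) } := by
  set T : H →ₗ.[ℂ] H :=
    { domain := A.domain,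
      toFun := (S : H →ₗ[ℂ] H).comp (A.toFun - A.domain.subtype) } with hTdef
  have hTapp : ∀ z : A.domain, T z = S (A z - (z : H)) := fun z => rfl
  have key : ∀ z : A.domain,
      ‖T z‖ ^ 2 = ‖(z : H)‖ ^ 2 - (⟪A z, (z : H)⟫_ℂ).re := by
    intro z
    rw [hTapp z]
    set y := A z - (z : H) with hy
    have h1 : ⟪(S ∘L S) y, y⟫_ℂ = ⟪S y, S y⟫_ℂ := by
      rw [ContinuousLinearMap.comp_apply]
      nth_rewrite 1 [← hSsa.adjoint_eq]
      exact ContinuousLinearMap.adjoint_inner_left S y (S y)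
    have hb : (⟪y, J y⟫_ℂ).re = (⟪J y, y⟫_ℂ).re := by
      have := inner_re_symm (𝕜 := ℂ) y (J y)
      simpa using this
    have h2 : ((⟪(S ∘L S) y, y⟫_ℂ)).re = -(⟪J y, y⟫_ℂ).re := by
      rw [hSsq]
      simp only [ContinuousLinearMap.neg_apply, ContinuousLinearMap.smul_apply,
        ContinuousLinearMap.add_apply, inner_neg_left, inner_smul_left, inner_add_left,
        ContinuousLinearMap.adjoint_inner_left]
      have hc : (starRingEnd ℂ) (1/2 : ℂ) = 1/2 := by simp [Complex.ext_iff]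
      rw [hc]
      simp only [Complex.neg_re, Complex.mul_re, Complex.add_re, Complex.add_im]
      norm_num
      linarith [hb]
    have h3 : ‖S y‖ ^ 2 = (⟪S y, S y⟫_ℂ).re := by
      rw [← inner_self_eq_norm_sq (𝕜 := ℂ)]; rfl
    have h6 : ((⟪(z:H), (z:H)⟫_ℂ)).re = ‖(z:H)‖ ^ 2 := by
      rw [← inner_self_eq_norm_sq (𝕜 := ℂ)]; rfl
    have h5 : (⟪J y, y⟫_ℂ).re = (⟪A z, (z:H)⟫_ℂ).re - ‖(z:H)‖ ^ 2 := by
      rw [hJ1 z, hy, inner_sub_right]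
      have h7 := inner_re_symm (𝕜 := ℂ) ((z:H)) (A z)
      simp only [RCLike.re_to_complex] at h7
      simp only [Complex.sub_re]
      rw [h7, h6]
    rw [h3, ← h1, h2, h5]
    ring
  constructor
  · -- form closable → operator closable
    intro hform
    refine ⟨(T.graph.topologicalClosure).toLinearPMap,
      (Submodule.toLinearPMap_graph_eq _ ?_).symm⟩
    rintro ⟨v, w⟩ hp hv
    simp only at hv ⊢
    subst hv
    have hp' : ((0 : H), w) ∈ closure (T.graph : Set (H × H)) := by
      rwa [← Submodule.topologicalClosure_coe, SetLike.mem_coe]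
    obtain ⟨u, humem, hulim⟩ := mem_closure_iff_seq_limit.mp hp'
    choose xs hxs1 hxs2 using fun n => T.mem_graph_iff.mp (humem n)
    have hx0 : Tendsto (fun n => ((xs n : H))) atTop (nhds (0 : H)) := by
      have h := (continuous_fst.tendsto _).comp hulim
      simp only [Function.comp] at h
      have he : (fun n => ((xs n : H))) = fun n => (u n).1 := funext fun n => hxs1 n
      rw [he]; exact h
    have hTlim : Tendsto (fun n => T (xs n)) atTop (nhds w) := by
      have h := (continuous_snd.tendsto _).comp hulim
      simp only [Function.comp] at h
      have he : (fun n => T (xs n)) = fun n => (u n).2 := funext fun n => hxs2 n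
      rw [he]; exact h
    have hrC : ∀ ε > 0, ∃ N, ∀ n ≥ N, ∀ m ≥ N,
        -(⟪A (xs n - xs m), ((xs n - xs m : A.domain) : H)⟫_ℂ).re < ε := by
      intro ε hε
      obtain ⟨N, hN⟩ := Metric.cauchySeq_iff.mp hTlim.cauchySeq (min 1 ε)
        (lt_min one_pos hε)
      refine ⟨N, fun n hn m hm => ?_⟩
      have hd := hN n hn m hm
      rw [dist_eq_norm] at hd
      have heq : -(⟪A (xs n - xs m), ((xs n - xs m : A.domain) : H)⟫_ℂ).re
          = ‖T (xs n - xs m)‖ ^ 2 - ‖((xs n - xs m : A.domain) : H)‖ ^ 2 := by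
        rw [key (xs n - xs m)]; ring
      rw [heq, T.map_sub]
      have h0 : (0:ℝ) ≤ ‖T (xs n) - T (xs m)‖ := norm_nonneg _
      have h1 : ‖T (xs n) - T (xs m)‖ < 1 := lt_of_lt_of_le hd (min_le_left _ _)
      have h2 : ‖T (xs n) - T (xs m)‖ < ε := lt_of_lt_of_le hd (min_le_right _ _)
      nlinarith [sq_nonneg (‖((xs n - xs m : A.domain) : H)‖)]
    have hr0 := hform xs hx0 hrC
    have hx0n : Tendsto (fun n => ‖(xs n : H)‖ ^ 2) atTop (nhds 0) := by
      have := (((continuous_norm.tendsto (0 : H)).comp hx0).pow 2)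
      simpa [Function.comp] using this
    have hnorm2 : Tendsto (fun n => ‖T (xs n)‖ ^ 2) atTop (nhds 0) := by
      have h := hx0n.add hr0
      rw [add_zero] at h
      have he : (fun n => ‖T (xs n)‖ ^ 2)
          = fun n => ‖(xs n : H)‖ ^ 2 + -(⟪A (xs n), ((xs n : A.domain) : H)⟫_ℂ).re := by
        funext n; rw [key (xs n)]; ring
      rw [he]; exact h
    have hT0 : Tendsto (fun n => T (xs n)) atTop (nhds (0 : H)) := by
      rw [tendsto_zero_iff_norm_tendsto_zero]
      have hs := (Real.continuous_sqrt.tendsto 0).comp hnorm2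
      simp only [Function.comp, Real.sqrt_zero] at hs
      have he : (fun n => ‖T (xs n)‖) = fun n => Real.sqrt (‖T (xs n)‖ ^ 2) :=
        funext fun n => (Real.sqrt_sq (norm_nonneg _)).symm
      rw [he]; exact hs
    exact tendsto_nhds_unique hTlim hT0
  · -- operator closable → form closable
    rintro ⟨f', hf'⟩ xs hx0 hrC
    have hTc : CauchySeq (fun n => T (xs n)) := by
      rw [Metric.cauchySeq_iff]
      intro ε hε
      obtain ⟨N1, hN1⟩ := hrC (ε ^ 2 / 2) (by positivity)
      obtain ⟨N2, hN2⟩ := Metric.cauchySeq_iff.mp hx0.cauchySeq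
        (Real.sqrt (ε ^ 2 / 2)) (by positivity)
      refine ⟨max N1 N2, fun n hn m hm => ?_⟩
      have hr := hN1 n (le_of_max_le_left hn) m (le_of_max_le_left hm)
      have hx := hN2 n (le_of_max_le_right hn) m (le_of_max_le_right hm)
      rw [dist_eq_norm] at hx ⊢
      have hxsub : ((xs n - xs m : A.domain) : H) = (xs n : H) - (xs m : H) := rfl
      have hxn : ‖((xs n - xs m : A.domain) : H)‖ ^ 2 < ε ^ 2 / 2 := by
        rw [hxsub]
        have hs := Real.sq_sqrt (le_of_lt (show (0:ℝ) < ε ^ 2 / 2 by positivity))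
        nlinarith [norm_nonneg ((xs n : H) - (xs m : H)), Real.sqrt_nonneg (ε ^ 2 / 2)]
      have hTn : ‖T (xs n) - T (xs m)‖ ^ 2 < ε ^ 2 := by
        rw [← T.map_sub]
        have := key (xs n - xs m)
        rw [this]
        linarith
      nlinarith [norm_nonneg (T (xs n) - T (xs m))]
    obtain ⟨y, hy⟩ := cauchySeq_tendsto_of_complete hTc
    have hcl : ((0 : H), y) ∈ closure (T.graph : Set (H × H)) :=
      mem_closure_of_tendsto (hx0.prodMk_nhds hy)
        (Eventually.of_forall fun n => T.mem_graph (xs n))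
    have hmem : ((0 : H), y) ∈ T.graph.topologicalClosure := by
      rw [← SetLike.mem_coe, Submodule.topologicalClosure_coe]; exact hcl
    rw [hf'] at hmem
    have hy0 : y = 0 := f'.graph_fst_eq_zero_snd hmem rfl
    subst hy0
    have h1 : Tendsto (fun n => ‖T (xs n)‖ ^ 2) atTop (nhds 0) := by
      have := (((continuous_norm.tendsto (0 : H)).comp hy).pow 2)
      simpa [Function.comp] using this
    have h2 : Tendsto (fun n => ‖(xs n : H)‖ ^ 2) atTop (nhds 0) := by
      have := (((continuous_norm.tendsto (0 : H)).comp hx0).pow 2)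
      simpa [Function.comp] using this
    have h3 := h1.sub h2
    rw [sub_zero] at h3
    have he : (fun n => -(⟪A (xs n), ((xs n : A.domain) : H)⟫_ℂ).re)
        = fun n => ‖T (xs n)‖ ^ 2 - ‖(xs n : H)‖ ^ 2 := by
      funext n; rw [key (xs n)]; ring
    rw [he]; exact h3
end

section
/- Let t be a sectorial sesquilinear form on a dense domain D in a complex Hilbert space, with symmetric part h[x,y] = (1/2)(t[x,y] + conj(t[y,x])) and imaginary part k[x,y] = (1/(2i))(t[x,y] − conj(t[y,x])), and suppose |k[x]| ≤ (tan θ)·h[x] for all x ∈ D (sector angle θ ∈ (0, π/2)). If t is closable, then its symmetric part h is closable. -/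
open Filter

/-!
The sector condition makes `‖t[x]‖` comparable to `h[x] = Re t[x]`, namely
`‖t[x]‖ ≤ (1 + |tan θ|) h[x]`. Hence an `h`-Cauchy sequence tending to `0` is `t`-Cauchy,
closability of `t` gives `t[xₙ] → 0`, and taking real parts gives `h[xₙ] → 0`.
-/

theorem Complex.norm_le_one_add_abs_mul_re {z : ℂ} {c : ℝ} (hre : 0 ≤ z.re)
    (him : |z.im| ≤ c * z.re) : ‖z‖ ≤ (1 + |c|) * z.re :=
  calc ‖z‖ ≤ |z.re| + |z.im| := Complex.norm_le_abs_re_add_abs_im z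
    _ ≤ z.re + |c| * z.re := by
      rw [abs_of_nonneg hre]
      linarith [mul_le_mul_of_nonneg_right (le_abs_self c) hre]
    _ = (1 + |c|) * z.re := by ring

theorem forall_exists_lt_of_le_mul {u v : ℕ → ℕ → ℝ} {C : ℝ} (hC : 0 < C)
    (hle : ∀ n m, v n m ≤ C * u n m)
    (hu : ∀ ε > 0, ∃ N, ∀ n ≥ N, ∀ m ≥ N, u n m < ε) :
    ∀ ε > 0, ∃ N, ∀ n ≥ N, ∀ m ≥ N, v n m < ε := by
  intro ε hε
  obtain ⟨N, hN⟩ := hu (ε / C) (div_pos hε hC)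
  refine ⟨N, fun n hn m hm => ?_⟩
  calc v n m ≤ C * u n m := hle n m
    _ < C * (ε / C) := mul_lt_mul_of_pos_left (hN n hn m hm) hC
    _ = ε := mul_div_cancel₀ ε hC.ne'

theorem stmt9_general {H : Type*} [NormedAddCommGroup H] [InnerProductSpace ℂ H]
    (D : Submodule ℂ H)
    (t : D →ₗ⋆[ℂ] D →ₗ[ℂ] ℂ)
    (θ : ℝ)
    (hRe : ∀ x : D, 0 ≤ (t x x).re)
    (hsector : ∀ x : D, |(t x x).im| ≤ Real.tan θ * (t x x).re)
    (hclosable : ∀ xs : ℕ → D,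
      Tendsto (fun n => ((xs n : H))) atTop (nhds 0) →
      (∀ ε > 0, ∃ N, ∀ n ≥ N, ∀ m ≥ N, ‖t (xs n - xs m) (xs n - xs m)‖ < ε) →
      Tendsto (fun n => t (xs n) (xs n)) atTop (nhds 0)) :
    ∀ xs : ℕ → D,
      Tendsto (fun n => ((xs n : H))) atTop (nhds 0) →
      (∀ ε > 0, ∃ N, ∀ n ≥ N, ∀ m ≥ N, (t (xs n - xs m) (xs n - xs m)).re < ε) →
      Tendsto (fun n => (t (xs n) (xs n)).re) atTop (nhds 0) := by
  intro xs hxs hcauchy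
  have hbound : ∀ x : D, ‖t x x‖ ≤ (1 + |Real.tan θ|) * (t x x).re := fun x =>
    Complex.norm_le_one_add_abs_mul_re (hRe x) (hsector x)
  have ht : Tendsto (fun n => t (xs n) (xs n)) atTop (nhds 0) :=
    hclosable xs hxs <| forall_exists_lt_of_le_mul (by positivity) (fun _ _ => hbound _) hcauchy
  exact (Complex.continuous_re.tendsto 0).comp ht

/-- Let `t` be a sectorial sesquilinear form on a dense domain `D`
(`0 ≤ Re t[x]` and `|Im t[x]| ≤ tan θ · Re t[x]` for a sector angle `θ ∈ (0, π/2)`,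
noting `h[x] = Re t[x]` and `k[x] = Im t[x]`). If `t` is closable, then its symmetric
part `h` is closable. -/
theorem stmt9 {H : Type*} [NormedAddCommGroup H] [InnerProductSpace ℂ H] [CompleteSpace H]
    (D : Submodule ℂ H) (hD : Dense (D : Set H))
    (t : D →ₗ⋆[ℂ] D →ₗ[ℂ] ℂ)
    (θ : ℝ) (hθ : θ ∈ Set.Ioo 0 (Real.pi / 2))
    (hRe : ∀ x : D, 0 ≤ (t x x).re)
    (hsector : ∀ x : D, |(t x x).im| ≤ Real.tan θ * (t x x).re)
    (hclosable : ∀ xs : ℕ → D,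
      Tendsto (fun n => ((xs n : H))) atTop (nhds 0) →
      (∀ ε > 0, ∃ N, ∀ n ≥ N, ∀ m ≥ N, ‖t (xs n - xs m) (xs n - xs m)‖ < ε) →
      Tendsto (fun n => t (xs n) (xs n)) atTop (nhds 0)) :
    ∀ xs : ℕ → D,
      Tendsto (fun n => ((xs n : H))) atTop (nhds 0) →
      (∀ ε > 0, ∃ N, ∀ n ≥ N, ∀ m ≥ N, (t (xs n - xs m) (xs n - xs m)).re < ε) →
      Tendsto (fun n => (t (xs n) (xs n)).re) atTop (nhds 0) :=
  stmt9_general D t θ hRe hsector hclosable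
end
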